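/- arXiv:2304.07563 — 6 statements merged into one kernel-verified Lean document; each statement's English description precedes it below -/
import Mathlib

section
/- For periodic grid functions u, v on a uniform grid of M points with spacing h, defining the bilinear operator ψ(u,v)_i = (1/3)[u_i Δ_x v_i + Δ_x(uv)_i] where Δ_x w_i = (w_{i+1} - w_{i-1})/(2h), the discrete inner product (ψ(u,v), v) = h Σ_{i=1}^M ψ(u,v)_i v_i equals zero. -/
/-- Central difference operator `Δ_x w i = (w (i+1) - w (i-1)) / (2h)`. -/
noncomputable def dX (h : ℝ) (w : ℤ → ℝ) (i : ℤ) : ℝ := (w (i + 1) - w (i - 1)) / (2 * h)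

/-- Bilinear operator `ψ(u,v)_i = (1/3)[u_i Δ_x v_i + Δ_x (uv)_i]`. -/
noncomputable def psiOp (h : ℝ) (u v : ℤ → ℝ) (i : ℤ) : ℝ :=
  (1 / 3) * (u i * dX h v i + dX h (fun j => u j * v j) i)

lemma telescope (F : ℤ → ℝ) (M : ℕ) :
    ∑ i ∈ Finset.Icc (1 : ℤ) (M : ℤ), (F i - F (i - 1)) = F M - F 0 := by
  induction M with
  | zero => simp
  | succ n ih =>
    have e : Finset.Icc (1 : ℤ) ((n + 1 : ℕ) : ℤ)
        = insert ((n : ℤ) + 1) (Finset.Icc (1 : ℤ) (n : ℤ)) := by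
      ext x; simp; omega
    rw [e, Finset.sum_insert (by simp), ih]
    push_cast
    ring

theorem stmt_0 (M : ℕ) (hM : 1 ≤ M) (h : ℝ) (hh : 0 < h) (u v : ℤ → ℝ)
    (hu : ∀ i : ℤ, u (i + M) = u i) (hv : ∀ i : ℤ, v (i + M) = v i) :
    h * ∑ i ∈ Finset.Icc (1 : ℤ) (M : ℤ), psiOp h u v i * v i = 0 := by
  set F : ℤ → ℝ := fun i => v i * v (i + 1) * (u i + u (i + 1)) with hF
  have hh6 : (6 : ℝ) * h ≠ 0 := by positivity
  have key : ∀ i : ℤ, psiOp h u v i * v i = (F i - F (i - 1)) / (6 * h) := by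
    intro i
    simp only [hF, psiOp, dX]
    have : i - 1 + 1 = i := by ring
    rw [this]
    field_simp
    ring
  have : ∑ i ∈ Finset.Icc (1 : ℤ) (M : ℤ), psiOp h u v i * v i
      = ∑ i ∈ Finset.Icc (1 : ℤ) (M : ℤ), (F i - F (i - 1)) / (6 * h) :=
    Finset.sum_congr rfl fun i _ => key i
  rw [this, ← Finset.sum_div, telescope F M]
  have hFM : F M = F 0 := by
    have ev : v ((M : ℤ)) = v 0 := by simpa using hv 0
    have eu : u ((M : ℤ)) = u 0 := by simpa using hu 0
    have ev1 : v ((M : ℤ) + 1) = v 1 := by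
      have := hv 1; rwa [show (1 : ℤ) + M = (M : ℤ) + 1 by ring] at this
    have eu1 : u ((M : ℤ) + 1) = u 1 := by
      have := hu 1; rwa [show (1 : ℤ) + M = (M : ℤ) + 1 by ring] at this
    simp only [hF, ev, eu, ev1, eu1]
    norm_num
  rw [hFM]
  simp
end

section
/- For a periodic grid function v on a uniform grid of M points with spacing h and L = Mh, and for every ε > 0, the discrete embedding inequality ‖v‖_∞² ≤ ε|v|_1² + (1/ε + 1/L)‖v‖² holds, where ‖v‖_∞ = max_{1≤i≤M} |v_i|, ‖v‖² = h Σ_{i=1}^M v_i², and |v|_1² = h Σ_{i=1}^M ((v_i - v_{i-1})/h)². -/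
-- telescoping sum over integer intervals
lemma telesc (f : ℤ → ℝ) : ∀ (n : ℕ) (j : ℤ),
    ∑ i ∈ Finset.Icc (j+1) (j+(n:ℤ)), (f i - f (i-1)) = f (j+(n:ℤ)) - f j := by
  intro n
  induction n with
  | zero => intro j; simp
  | succ n ih =>
    intro j
    have h1 : (j + ((n:ℤ)+1)) = (j + (n:ℤ)) + 1 := by ring
    have h2 : Finset.Icc (j+1) (j+(n:ℤ)+1) = insert (j+(n:ℤ)+1) (Finset.Icc (j+1) (j+(n:ℤ))) := by
      ext x; simp [Finset.mem_Icc]; omega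
    have h3 : (j+(n:ℤ)+1) ∉ Finset.Icc (j+1) (j+(n:ℤ)) := by
      simp [Finset.mem_Icc]
    push_cast
    rw [h1, h2, Finset.sum_insert h3, ih j]
    have h4 : j+(n:ℤ)+1-1 = j+(n:ℤ) := by ring
    rw [h4]; ring

set_option maxHeartbeats 800000 in
theorem stmt_4 (M : ℕ) (hM : 1 ≤ M) (h L : ℝ) (hh : 0 < h) (hL : L = M * h)
    (v : ℤ → ℝ) (hv : ∀ i : ℤ, v (i + M) = v i) (ε : ℝ) (hε : 0 < ε) :
    ((Finset.Icc (1 : ℤ) (M : ℤ)).sup'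
        (Finset.nonempty_Icc.mpr (by exact_mod_cast hM)) (fun i => |v i|)) ^ 2 ≤
      ε * (h * ∑ i ∈ Finset.Icc (1 : ℤ) (M : ℤ), ((v i - v (i - 1)) / h) ^ 2) +
      (1 / ε + 1 / L) * (h * ∑ i ∈ Finset.Icc (1 : ℤ) (M : ℤ), (v i) ^ 2) := by
  have hMZ : (1 : ℤ) ≤ (M : ℤ) := by exact_mod_cast hM
  set s : Finset ℤ := Finset.Icc (1 : ℤ) (M : ℤ) with hs
  have hne : s.Nonempty := Finset.nonempty_Icc.mpr hMZ
  set g : ℤ → ℝ := fun i => |v i ^ 2 - v (i-1) ^ 2| with hg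
  have hgnn : ∀ i, 0 ≤ g i := fun i => abs_nonneg _
  -- periodicity of g
  have hgper : ∀ i : ℤ, g (i + M) = g i := by
    intro i
    have h1 : v (i + M) = v i := hv i
    have h2 : v (i + M - 1) = v (i - 1) := by
      have := hv (i - 1); rw [show i - 1 + (M:ℤ) = i + M - 1 by ring] at this; exact this
    simp only [hg, h1, h2]
  -- choose max and min points
  obtain ⟨k, hk, hkeq⟩ := Finset.exists_mem_eq_sup' hne (fun i => |v i|)
  obtain ⟨j, hj, hjeq⟩ := Finset.exists_mem_eq_inf' hne (fun i => v i ^ 2)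
  simp only [hs, Finset.mem_Icc] at hk hj
  set S : ℝ := ∑ i ∈ s, (v i) ^ 2 with hS
  set D : ℝ := ∑ i ∈ s, ((v i - v (i - 1)) / h) ^ 2 with hD
  -- min bound : M * v j ^ 2 ≤ S
  have hcard : s.card = M := by
    rw [hs, Int.card_Icc]; omega
  have hjle : (M : ℝ) * v j ^ 2 ≤ S := by
    have := Finset.card_nsmul_le_sum s (fun i => (v i) ^ 2) (v j ^ 2)
      (fun i hi => by
        have : s.inf' hne (fun i => v i ^ 2) ≤ v i ^ 2 := Finset.inf'_le _ hi
        rw [hjeq] at this; exact this)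
    rw [hcard, nsmul_eq_mul] at this
    exact_mod_cast this
  -- key telescoping bound : v k ^ 2 ≤ v j ^ 2 + ∑ g over s
  have hkey : v k ^ 2 ≤ v j ^ 2 + ∑ i ∈ s, g i := by
    have hle : ∀ (t : Finset ℤ), t ⊆ s → ∑ i ∈ t, g i ≤ ∑ i ∈ s, g i :=
      fun t ht => Finset.sum_le_sum_of_subset_of_nonneg ht (fun i _ _ => hgnn i)
    rcases le_or_gt j k with hjk | hjk
    · -- path from j to k inside s
      have hn : k = j + ((k - j).toNat : ℤ) := by omega
      have htel := telesc (fun i => v i ^ 2) (k - j).toNat j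
      rw [← hn] at htel
      have hsub : Finset.Icc (j+1) k ⊆ s := by
        rw [hs]; intro x hx; simp [Finset.mem_Icc] at hx ⊢; omega
      have : v k ^ 2 - v j ^ 2 ≤ ∑ i ∈ Finset.Icc (j+1) k, g i := by
        rw [← htel]
        exact Finset.sum_le_sum (fun i _ => le_abs_self _)
      linarith [hle _ hsub, this]
    · -- path from j to k + M
      have hvk : v k ^ 2 = v (k + M) ^ 2 := by rw [hv k]
      have hn : k + (M:ℤ) = j + ((k + M - j).toNat : ℤ) := by omega
      have htel := telesc (fun i => v i ^ 2) (k + M - j).toNat j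
      rw [← hn] at htel
      -- split the interval
      have hsplit : Finset.Icc (j+1) (k + (M:ℤ)) =
          Finset.Icc (j+1) (M:ℤ) ∪ Finset.Icc ((M:ℤ)+1) (k + (M:ℤ)) := by
        ext x; simp [Finset.mem_Icc]; omega
      have hdisj : Disjoint (Finset.Icc (j+1) (M:ℤ)) (Finset.Icc ((M:ℤ)+1) (k + (M:ℤ))) := by
        rw [Finset.disjoint_left]; intro x hx hx'
        simp [Finset.mem_Icc] at hx hx'; omega
      -- shift the second part down by M
      have hshift : ∑ i ∈ Finset.Icc ((M:ℤ)+1) (k + (M:ℤ)), g i = ∑ i ∈ Finset.Icc 1 k, g i := by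
        rw [show Finset.Icc ((M:ℤ)+1) (k + (M:ℤ)) = Finset.Icc ((M:ℤ)+1) ((M:ℤ)+k) by
          rw [add_comm k]]
        rw [← Finset.map_add_left_Icc 1 k (M:ℤ), Finset.sum_map]
        refine Finset.sum_congr rfl (fun i _ => ?_)
        show g ((M:ℤ) + i) = g i
        rw [add_comm, hgper]
      have hsub : Finset.Icc (j+1) (M:ℤ) ∪ Finset.Icc 1 k ⊆ s := by
        rw [hs]; intro x hx; simp [Finset.mem_Icc] at hx ⊢; omega
      have hdisj2 : Disjoint (Finset.Icc (j+1) (M:ℤ)) (Finset.Icc (1:ℤ) k) := by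
        rw [Finset.disjoint_left]; intro x hx hx'
        simp [Finset.mem_Icc] at hx hx'; omega
      have h1 : v (k + (M:ℤ)) ^ 2 - v j ^ 2 ≤ ∑ i ∈ Finset.Icc (j+1) (k + (M:ℤ)), g i := by
        rw [← htel]
        exact Finset.sum_le_sum (fun i _ => le_abs_self _)
      have h2 : ∑ i ∈ Finset.Icc (j+1) (k + (M:ℤ)), g i ≤ ∑ i ∈ s, g i := by
        rw [hsplit, Finset.sum_union hdisj, hshift, ← Finset.sum_union hdisj2]
        exact hle _ hsub
      rw [hvk]; linarith
  -- pointwise bound on g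
  have hgbd : ∀ i : ℤ, g i ≤ ε * h * ((v i - v (i-1)) / h) ^ 2
      + h / (2*ε) * (v i) ^ 2 + h / (2*ε) * (v (i-1)) ^ 2 := by
    intro i
    set a := v i with ha
    set b := v (i-1) with hb
    set d := (a - b) / h with hd
    have hab : a - b = h * d := by rw [hd, mul_div_assoc']; exact (mul_div_cancel_left₀ (a - b) hh.ne').symm
    have h1 : g i = |a - b| * |a + b| := by
      rw [hg]; simp only
      rw [show v i ^ 2 - v (i-1) ^ 2 = (a - b) * (a + b) by ring, abs_mul]
    have h2 : |a - b| = h * |d| := by rw [hab, abs_mul, abs_of_pos hh]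
    have h3 : |a + b| ≤ |a| + |b| := abs_add_le _ _
    have h4 : g i ≤ h * |d| * (|a| + |b|) := by
      rw [h1, h2]
      exact mul_le_mul_of_nonneg_left h3 (by positivity)
    have amgm : ∀ x : ℝ, |d| * |x| ≤ (ε * d ^ 2 + x ^ 2 / ε) / 2 := by
      intro x
      rw [le_div_iff₀ (by norm_num : (0:ℝ) < 2), ← mul_le_mul_iff_right₀ hε]
      have e : ε * (ε * d ^ 2 + x ^ 2 / ε) = ε * (ε * d ^ 2) + x ^ 2 := by
        field_simp
      rw [e, ← sq_abs d, ← sq_abs x]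
      nlinarith [sq_nonneg (ε * |d| - |x|)]
    have h5 : |d| * |a| ≤ (ε * d ^ 2 + a ^ 2 / ε) / 2 := amgm a
    have h6 : |d| * |b| ≤ (ε * d ^ 2 + b ^ 2 / ε) / 2 := amgm b
    have h7 : h * |d| * (|a| + |b|) = h * (|d| * |a|) + h * (|d| * |b|) := by ring
    calc g i ≤ h * |d| * (|a| + |b|) := h4
      _ = h * (|d| * |a|) + h * (|d| * |b|) := h7
      _ ≤ h * ((ε * d ^ 2 + a ^ 2 / ε) / 2) + h * ((ε * d ^ 2 + b ^ 2 / ε) / 2) := by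
          gcongr
      _ = ε * h * d ^ 2 + h / (2*ε) * a ^ 2 + h / (2*ε) * b ^ 2 := by
          field_simp; ring
  -- shift sum identity : ∑ v(i-1)^2 = S
  have hshiftS : ∑ i ∈ s, (v (i-1)) ^ 2 = S := by
    have e1 : ∑ i ∈ s, (v (i-1)) ^ 2 = ∑ i ∈ Finset.Icc (0:ℤ) ((M:ℤ)-1), (v i) ^ 2 := by
      rw [show Finset.Icc (0:ℤ) ((M:ℤ)-1) = Finset.Icc ((-1)+1) ((-1)+(M:ℤ)) by ring_nf]
      rw [← Finset.map_add_left_Icc 1 (M:ℤ) (-1), Finset.sum_map]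
      refine Finset.sum_congr rfl (fun i _ => ?_)
      show (v (i-1)) ^ 2 = (v (-1 + i)) ^ 2
      rw [show (-1 : ℤ) + i = i - 1 by ring]
    have hv0 : v 0 = v (M:ℤ) := by
      have := hv 0; rw [zero_add] at this; exact this.symm
    have e2 : Finset.Icc (0:ℤ) ((M:ℤ)-1) = insert 0 (Finset.Icc (1:ℤ) ((M:ℤ)-1)) := by
      ext x; simp [Finset.mem_Icc]; omega
    have e3 : s = insert (M:ℤ) (Finset.Icc (1:ℤ) ((M:ℤ)-1)) := by
      rw [hs]; ext x; simp [Finset.mem_Icc]; omega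
    have n2 : (0:ℤ) ∉ Finset.Icc (1:ℤ) ((M:ℤ)-1) := by simp [Finset.mem_Icc]
    have n3 : (M:ℤ) ∉ Finset.Icc (1:ℤ) ((M:ℤ)-1) := by simp [Finset.mem_Icc]
    rw [e1, e2, Finset.sum_insert n2, hS]
    conv_rhs => rw [e3]
    rw [Finset.sum_insert n3, hv0]
  -- sum bound
  have hsumg : ∑ i ∈ s, g i ≤ ε * h * D + h / ε * S := by
    calc ∑ i ∈ s, g i
        ≤ ∑ i ∈ s, (ε * h * ((v i - v (i - 1)) / h) ^ 2
            + h / (2*ε) * (v i) ^ 2 + h / (2*ε) * (v (i-1)) ^ 2) :=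
          Finset.sum_le_sum (fun i _ => hgbd i)
      _ = ε * h * D + h / (2*ε) * S + h / (2*ε) * ∑ i ∈ s, (v (i-1)) ^ 2 := by
          rw [Finset.sum_add_distrib, Finset.sum_add_distrib, ← Finset.mul_sum,
            ← Finset.mul_sum, ← Finset.mul_sum, hD, hS]
      _ = ε * h * D + h / ε * S := by rw [hshiftS]; ring
  -- positivity facts
  have hMpos : (0:ℝ) < M := by exact_mod_cast hM
  have hLpos : 0 < L := by rw [hL]; positivity
  have hSnn : 0 ≤ S := Finset.sum_nonneg (fun i _ => sq_nonneg _)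
  -- final computation
  have hsup : (s.sup' hne (fun i => |v i|)) ^ 2 = v k ^ 2 := by
    rw [hkeq]; exact sq_abs _
  have hfinal : (1 / ε + 1 / L) * (h * S) = (1/ε) * (h * S) + S / M := by
    rw [hL]; field_simp
  have hjle' : v j ^ 2 ≤ S / M := by
    rw [le_div_iff₀ hMpos]; linarith [hjle]
  have : v k ^ 2 ≤ ε * (h * D) + ((1/ε) * (h * S) + S / M) := by
    have : h / ε * S = (1/ε) * (h * S) := by ring
    calc v k ^ 2 ≤ v j ^ 2 + ∑ i ∈ s, g i := hkey
      _ ≤ S / M + (ε * h * D + h / ε * S) := by linarith [hjle', hsumg]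
      _ = ε * (h * D) + ((1/ε) * (h * S) + S / M) := by ring
  calc (s.sup' hne (fun i => |v i|)) ^ 2 = v k ^ 2 := hsup
    _ ≤ ε * (h * D) + ((1/ε) * (h * S) + S / M) := this
    _ = ε * (h * D) + (1 / ε + 1 / L) * (h * S) := by rw [hfinal]
end

section
/- Suppose {u^n, ρ^n} solve the nonlinear difference scheme δ_t u_i^{n+1/2} - δ_t δ_x² u_i^{n+1/2} - κ Δ_x u_i^{n+1/2} + 3ψ(u^{n+1/2}, u^{n+1/2})_i = 3σ ψ(δ_x² u^{n+1/2}, u^{n+1/2})_i - μ Δ_x δ_x² u_i^{n+1/2} - (1 - 2Ωκ) ρ_i^{n+1/2} Δ_x ρ_i^{n+1/2} + 2Ω ρ_i^{n+1/2} Δ_x(ρ^{n+1/2} u^{n+1/2})_i and δ_t ρ_i^{n+1/2} + Δ_x(ρ^{n+1/2} u^{n+1/2})_i = 0 with M-periodic boundary conditions. Then the discrete energy E^n = (1/2)[‖u^n‖² + |u^n|_1² + (1 - 2Ωκ)‖ρ^n‖²] is conserved: E^n = E^0 for all 0 ≤ n ≤ N. -/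
/-- Second-order central difference `δ_x² w i = (w (i+1) - 2 w i + w (i-1)) / h²`. -/
noncomputable def dXX (h : ℝ) (w : ℤ → ℝ) (i : ℤ) : ℝ := (w (i + 1) - 2 * w i + w (i - 1)) / h ^ 2

/-- Time average `w^{n+1/2}`. -/
noncomputable def half (a b : ℤ → ℝ) : ℤ → ℝ := fun i => (a i + b i) / 2

/-- Time difference quotient `δ_t w^{n+1/2}`. -/
noncomputable def dT (τ : ℝ) (a b : ℤ → ℝ) : ℤ → ℝ := fun i => (b i - a i) / τ

/-- Discrete energy `E^n = (1/2)[‖u‖² + |u|₁² + (1-2Ωκ)‖ρ‖²]`. -/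
noncomputable def energy (M : ℕ) (h Ω κ : ℝ) (u ρ : ℤ → ℝ) : ℝ :=
  (1 / 2) * (h * ∑ i ∈ Finset.Icc (1 : ℤ) (M : ℤ), (u i) ^ 2
    + h * ∑ i ∈ Finset.Icc (1 : ℤ) (M : ℤ), ((u i - u (i - 1)) / h) ^ 2
    + (1 - 2 * Ω * κ) * (h * ∑ i ∈ Finset.Icc (1 : ℤ) (M : ℤ), (ρ i) ^ 2))

noncomputable def S (M : ℕ) (g : ℤ → ℝ) : ℝ := ∑ i ∈ Finset.Icc (1 : ℤ) (M : ℤ), g i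
def Per (M : ℕ) (w : ℤ → ℝ) : Prop := ∀ i : ℤ, w (i + (M : ℤ)) = w i

section lems
variable {M : ℕ}

lemma S_congr {f g : ℤ → ℝ} (h : ∀ i, f i = g i) : S M f = S M g :=
  Finset.sum_congr rfl fun i _ => h i

lemma S_add (f g : ℤ → ℝ) : S M (fun i => f i + g i) = S M f + S M g :=
  Finset.sum_add_distrib

lemma S_sub (f g : ℤ → ℝ) : S M (fun i => f i - g i) = S M f - S M g :=
  Finset.sum_sub_distrib _ _

lemma S_cmul (c : ℝ) (f : ℤ → ℝ) : S M (fun i => c * f i) = c * S M f :=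
  (Finset.mul_sum _ _ _).symm

lemma S_div (c : ℝ) (f : ℤ → ℝ) : S M (fun i => f i / c) = S M f / c := by
  unfold S; rw [Finset.sum_div]

lemma Per.mul {a b : ℤ → ℝ} (ha : Per M a) (hb : Per M b) :
    Per M (fun i => a i * b i) := fun i => by simp only []; rw [ha, hb]

lemma Per.half {a b : ℤ → ℝ} (ha : Per M a) (hb : Per M b) : Per M (half a b) := fun i => by
  unfold _root_.half; rw [ha, hb]

lemma Per.dT {τ : ℝ} {a b : ℤ → ℝ} (ha : Per M a) (hb : Per M b) : Per M (dT τ a b) := fun i => by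
  unfold _root_.dT; rw [ha, hb]

lemma Per.shift1 {a : ℤ → ℝ} (ha : Per M a) : Per M (fun i => a (i + 1)) := fun i => by
  simp only []; rw [show i + (M:ℤ) + 1 = (i + 1) + M by ring, ha]

lemma Per.shiftm1 {a : ℤ → ℝ} (ha : Per M a) : Per M (fun i => a (i - 1)) := fun i => by
  simp only []; rw [show i + (M:ℤ) - 1 = (i - 1) + M by ring, ha]

lemma Per.dX {h : ℝ} {a : ℤ → ℝ} (ha : Per M a) : Per M (dX h a) := fun i => by
  unfold _root_.dX
  rw [show i + (M:ℤ) + 1 = (i + 1) + M by ring, show i + (M:ℤ) - 1 = (i - 1) + M by ring, ha, ha]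

lemma Per.dXX {h : ℝ} {a : ℤ → ℝ} (ha : Per M a) : Per M (dXX h a) := fun i => by
  unfold _root_.dXX
  rw [show i + (M:ℤ) + 1 = (i + 1) + M by ring, show i + (M:ℤ) - 1 = (i - 1) + M by ring, ha, ha, ha]

lemma sum_shift (hM : 1 ≤ M) {w : ℤ → ℝ} (hw : Per M w) :
    S M (fun i => w (i + 1)) = S M w := by
  unfold S
  have e1 : ∑ i ∈ Finset.Icc (1:ℤ) (M:ℤ), w (i+1)
      = ∑ i ∈ Finset.Icc (2:ℤ) ((M:ℤ)+1), w i := by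
    rw [show (2:ℤ) = 1 + 1 by ring, ← Finset.map_add_right_Icc, Finset.sum_map]
    rfl
  have hM' : (1:ℤ) ≤ (M:ℤ) := by exact_mod_cast hM
  have e2 : Finset.Icc (2:ℤ) ((M:ℤ)+1) = insert ((M:ℤ)+1) (Finset.Icc 2 (M:ℤ)) := by
    ext x; simp only [Finset.mem_Icc, Finset.mem_insert]; omega
  have e3 : Finset.Icc (1:ℤ) (M:ℤ) = insert 1 (Finset.Icc 2 (M:ℤ)) := by
    ext x; simp only [Finset.mem_Icc, Finset.mem_insert]; omega
  have n2 : ((M:ℤ)+1) ∉ Finset.Icc (2:ℤ) (M:ℤ) := by simp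
  have n3 : (1:ℤ) ∉ Finset.Icc (2:ℤ) (M:ℤ) := by simp
  rw [e1, e2, Finset.sum_insert n2, e3, Finset.sum_insert n3]
  have : w ((M:ℤ)+1) = w 1 := by rw [show (M:ℤ)+1 = 1 + (M:ℤ) by ring, hw]
  rw [this]

lemma sum_shift' (hM : 1 ≤ M) {w : ℤ → ℝ} (hw : Per M w) :
    S M (fun i => w (i - 1)) = S M w := by
  have h2 : Per M (fun i => w (i - 1)) := hw.shiftm1
  have := sum_shift hM h2
  simp only [add_sub_cancel_right] at this
  exact this.symm

lemma L1 (hM : 1 ≤ M) {a b : ℤ → ℝ} (ha : Per M a) (hb : Per M b) :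
    S M (fun i => a (i + 1) * b i) = S M (fun i => a i * b (i - 1)) := by
  have := sum_shift' hM (ha.shift1.mul hb)
  simp only [sub_add_cancel] at this
  exact this.symm

lemma L2 (hM : 1 ≤ M) {a b : ℤ → ℝ} (ha : Per M a) (hb : Per M b) :
    S M (fun i => a i * b (i + 1)) = S M (fun i => a (i - 1) * b i) := by
  have := sum_shift hM (ha.shiftm1.mul hb)
  simp only [add_sub_cancel_right] at this
  exact this

lemma L3 (hM : 1 ≤ M) {a b : ℤ → ℝ} (ha : Per M a) (hb : Per M b) :
    S M (fun i => a (i + 1) * b (i + 1)) = S M (fun i => a i * b i) :=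
  sum_shift hM (ha.mul hb)

lemma L4 (hM : 1 ≤ M) {a b : ℤ → ℝ} (ha : Per M a) (hb : Per M b) :
    S M (fun i => a (i - 1) * b (i - 1)) = S M (fun i => a i * b i) :=
  sum_shift' hM (ha.mul hb)

/-- Summation by parts for `dX`. -/
lemma sbp (hM : 1 ≤ M) {h : ℝ} {w g : ℤ → ℝ} (hw : Per M w) (hg : Per M g) :
    S M (fun i => dX h w i * g i) = - S M (fun i => w i * dX h g i) := by
  have e1 : ∀ i, dX h w i * g i = (w (i + 1) * g i - w (i - 1) * g i) / (2 * h) := by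
    intro i; unfold _root_.dX; ring
  have e2 : ∀ i, w i * dX h g i = (w i * g (i + 1) - w i * g (i - 1)) / (2 * h) := by
    intro i; unfold _root_.dX; ring
  rw [S_congr e1, S_congr e2, S_div, S_div, S_sub, S_sub, L1 hM hw hg, L2 hM hw hg]
  ring

/-- `(Δ_x w, w) = 0`. -/
lemma sdx_self (hM : 1 ≤ M) {h : ℝ} {w : ℤ → ℝ} (hw : Per M w) :
    S M (fun i => dX h w i * w i) = 0 := by
  have h1 := sbp hM (h := h) hw hw
  have h2 : S M (fun i => w i * dX h w i) = S M (fun i => dX h w i * w i) :=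
    S_congr fun i => mul_comm _ _
  rw [h2] at h1; linarith

/-- `(ψ(a,v), v) = 0`. -/
lemma spsi (hM : 1 ≤ M) {h : ℝ} {a v : ℤ → ℝ} (ha : Per M a) (hv : Per M v) :
    S M (fun i => psiOp h a v i * v i) = 0 := by
  have e1 : ∀ i, psiOp h a v i * v i
      = (1/3 : ℝ) * (a i * v i * dX h v i) + (1/3 : ℝ) * (dX h (fun j => a j * v j) i * v i) := by
    intro i; unfold _root_.psiOp; ring
  rw [S_congr e1, S_add, S_cmul, S_cmul, sbp hM (ha.mul hv) hv]
  have e2 : S M (fun i => (fun j => a j * v j) i * dX h v i)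
      = S M (fun i => a i * v i * dX h v i) := S_congr fun i => by ring
  rw [e2]; ring

/-- `(δ_x² v, Δ_x v) = 0`. -/
lemma sdxx_dx (hM : 1 ≤ M) {h : ℝ} {v : ℤ → ℝ} (hv : Per M v) :
    S M (fun i => dXX h v i * dX h v i) = 0 := by
  have e1 : ∀ i, dXX h v i * dX h v i
      = ((v (i + 1) * v (i + 1) - v (i - 1) * v (i - 1))
          - (2 * (v i * v (i + 1)) - 2 * (v i * v (i - 1)))) / h ^ 2 / (2 * h) := by
    intro i; unfold _root_.dXX _root_.dX; ring
  rw [S_congr e1]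
  simp only [S_div, S_sub, S_cmul]
  rw [L3 hM hv hv, L2 hM hv hv]
  have e2 : S M (fun i => v (i - 1) * v (i - 1)) = S M (fun i => v i * v i) := L4 hM hv hv
  have e3 : S M (fun i => v i * v (i - 1)) = S M (fun i => v (i - 1) * v i) :=
    S_congr fun i => mul_comm _ _
  rw [e2, e3]
  ring

/-- `(δ_x² w, g) = -(1/h²) Σ (∇w)(∇g)`. -/
lemma sdxx (hM : 1 ≤ M) {h : ℝ} {w g : ℤ → ℝ} (hw : Per M w) (hg : Per M g) :
    S M (fun i => dXX h w i * g i)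
      = -((1 / h ^ 2) * S M (fun i => (w i - w (i - 1)) * (g i - g (i - 1)))) := by
  have e1 : ∀ i, dXX h w i * g i
      = (w (i + 1) * g i - (2 * (w i * g i) - w (i - 1) * g i)) / h ^ 2 := by
    intro i; unfold _root_.dXX; ring
  have e2 : ∀ i, (w i - w (i - 1)) * (g i - g (i - 1))
      = (w i * g i - w i * g (i - 1)) - (w (i - 1) * g i - w (i - 1) * g (i - 1)) := by
    intro i; ring
  rw [S_congr e1, S_congr e2]
  simp only [S_div, S_sub, S_cmul]
  rw [L1 hM hw hg, L4 hM hw hg]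
  ring

lemma S_neg (f : ℤ → ℝ) : S M (fun i => -(f i)) = - S M f := by
  unfold S; rw [← Finset.sum_neg_distrib]

end lems

lemma step {M : ℕ} (hM : 1 ≤ M) {h τ : ℝ} (hh : h ≠ 0) (hτ : τ ≠ 0)
    (κ μ σ Ω : ℝ) (u₀ u₁ ρ₀ ρ₁ : ℤ → ℝ)
    (hu₀ : Per M u₀) (hu₁ : Per M u₁) (hρ₀ : Per M ρ₀) (hρ₁ : Per M ρ₁)
    (hA : ∀ i : ℤ,
      dT τ u₀ u₁ i - dT τ (fun j => dXX h u₀ j) (fun j => dXX h u₁ j) i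
        - κ * dX h (half u₀ u₁) i + 3 * psiOp h (half u₀ u₁) (half u₀ u₁) i
      = 3 * σ * psiOp h (fun j => dXX h (half u₀ u₁) j) (half u₀ u₁) i
        - μ * dX h (fun j => dXX h (half u₀ u₁) j) i
        - (1 - 2 * Ω * κ) * half ρ₀ ρ₁ i * dX h (half ρ₀ ρ₁) i
        + 2 * Ω * half ρ₀ ρ₁ i * dX h (fun j => half ρ₀ ρ₁ j * half u₀ u₁ j) i)
    (hB : ∀ i : ℤ,
      dT τ ρ₀ ρ₁ i + dX h (fun j => half ρ₀ ρ₁ j * half u₀ u₁ j) i = 0) :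
    energy M h Ω κ u₁ ρ₁ = energy M h Ω κ u₀ ρ₀ := by
  set v := half u₀ u₁ with hvdef
  set r := half ρ₀ ρ₁ with hrdef
  set d := dT τ u₀ u₁ with hddef
  set e := dT τ ρ₀ ρ₁ with hedef
  have hv : Per M v := by rw [hvdef]; exact hu₀.half hu₁
  have hr : Per M r := by rw [hrdef]; exact hρ₀.half hρ₁
  have hd : Per M d := by rw [hddef]; exact hu₀.dT hu₁
  have he : Per M e := by rw [hedef]; exact hρ₀.dT hρ₁
  have hdtxx : ∀ i : ℤ, dT τ (fun j => dXX h u₀ j) (fun j => dXX h u₁ j) i = dXX h d i := by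
    intro i
    rw [hddef]
    simp only [dT, dXX]
    ring
  have hApt : ∀ i : ℤ, d i * v i
      = dXX h d i * v i + κ * (dX h v i * v i) - 3 * (psiOp h v v i * v i)
        + 3 * σ * (psiOp h (fun j => dXX h v j) v i * v i)
        - μ * (dX h (fun j => dXX h v j) i * v i)
        - (1 - 2 * Ω * κ) * (r i * v i * dX h r i)
        + 2 * Ω * (r i * v i * dX h (fun j => r j * v j) i) := by
    intro i
    have h1 := hA i
    rw [hdtxx i] at h1
    linear_combination v i * h1
  have hsum : S M (fun i => d i * v i)
      = S M (fun i => dXX h d i * v i) + κ * S M (fun i => dX h v i * v i)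
        - 3 * S M (fun i => psiOp h v v i * v i)
        + 3 * σ * S M (fun i => psiOp h (fun j => dXX h v j) v i * v i)
        - μ * S M (fun i => dX h (fun j => dXX h v j) i * v i)
        - (1 - 2 * Ω * κ) * S M (fun i => r i * v i * dX h r i)
        + 2 * Ω * S M (fun i => r i * v i * dX h (fun j => r j * v j) i) := by
    rw [S_congr hApt]
    simp only [S_add, S_sub, S_cmul]
  have z1 : S M (fun i => dX h v i * v i) = 0 := sdx_self hM hv
  have z2 : S M (fun i => psiOp h v v i * v i) = 0 := spsi hM hv hv
  have z3 : S M (fun i => psiOp h (fun j => dXX h v j) v i * v i) = 0 :=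
    spsi hM hv.dXX hv
  have z4 : S M (fun i => dX h (fun j => dXX h v j) i * v i) = 0 := by
    rw [sbp hM hv.dXX hv]
    have e4 : S M (fun i => (fun j => dXX h v j) i * dX h v i)
        = S M (fun i => dXX h v i * dX h v i) := S_congr fun i => rfl
    rw [e4, sdxx_dx hM hv, neg_zero]
  have z5 : S M (fun i => r i * v i * dX h (fun j => r j * v j) i) = 0 := by
    have h0 : S M (fun i => dX h (fun j => r j * v j) i * (fun j => r j * v j) i) = 0 :=
      sdx_self hM (hr.mul hv)
    have e5 : S M (fun i => r i * v i * dX h (fun j => r j * v j) i)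
        = S M (fun i => dX h (fun j => r j * v j) i * (fun j => r j * v j) i) :=
      S_congr fun i => by simp only []; ring
    rw [e5, h0]
  have hBpt : ∀ i : ℤ, e i * r i = -(dX h (fun j => r j * v j) i * r i) := by
    intro i
    have h1 := hB i
    linear_combination r i * h1
  have her : S M (fun i => e i * r i) = S M (fun i => r i * v i * dX h r i) := by
    rw [S_congr hBpt, S_neg, sbp hM (hr.mul hv) hr, neg_neg]
  have hdxxd : S M (fun i => dXX h d i * v i)
      = -((1 / h ^ 2) * S M (fun i => (d i - d (i - 1)) * (v i - v (i - 1)))) :=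
    sdxx hM hd hv
  have key : S M (fun i => d i * v i)
      + (1 / h ^ 2) * S M (fun i => (d i - d (i - 1)) * (v i - v (i - 1)))
      + (1 - 2 * Ω * κ) * S M (fun i => e i * r i) = 0 := by
    rw [hsum, z1, z2, z3, z4, z5, her, hdxxd]
    ring
  have ept : ∀ i : ℤ, h * τ * (d i * v i
        + (1 / h ^ 2) * ((d i - d (i - 1)) * (v i - v (i - 1)))
        + (1 - 2 * Ω * κ) * (e i * r i))
      = (1 / 2) * (h * (u₁ i ^ 2) + h * (((u₁ i - u₁ (i - 1)) / h) ^ 2)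
          + (1 - 2 * Ω * κ) * (h * (ρ₁ i ^ 2)))
        - (1 / 2) * (h * (u₀ i ^ 2) + h * (((u₀ i - u₀ (i - 1)) / h) ^ 2)
          + (1 - 2 * Ω * κ) * (h * (ρ₀ i ^ 2))) := by
    intro i
    rw [hddef, hedef, hvdef, hrdef]
    simp only [dT, half]
    field_simp
    ring
  have rhs_eq : h * τ * (S M (fun i => d i * v i)
        + (1 / h ^ 2) * S M (fun i => (d i - d (i - 1)) * (v i - v (i - 1)))
        + (1 - 2 * Ω * κ) * S M (fun i => e i * r i))
      = S M (fun i => h * τ * (d i * v i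
        + (1 / h ^ 2) * ((d i - d (i - 1)) * (v i - v (i - 1)))
        + (1 - 2 * Ω * κ) * (e i * r i))) := by
    simp only [S_add, S_cmul]
  have ediff : energy M h Ω κ u₁ ρ₁ - energy M h Ω κ u₀ ρ₀
      = h * τ * (S M (fun i => d i * v i)
        + (1 / h ^ 2) * S M (fun i => (d i - d (i - 1)) * (v i - v (i - 1)))
        + (1 - 2 * Ω * κ) * S M (fun i => e i * r i)) := by
    rw [rhs_eq, S_congr ept]
    simp only [S_sub, S_add, S_cmul]
    unfold energy
    simp only [S]
  have : energy M h Ω κ u₁ ρ₁ - energy M h Ω κ u₀ ρ₀ = 0 := by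
    rw [ediff, key, mul_zero]
  linarith

theorem stmt_6 (M N : ℕ) (hM : 1 ≤ M) (h τ : ℝ) (hh : 0 < h) (hτ : 0 < τ)
    (κ μ σ Ω : ℝ) (hΩ : 0 ≤ Ω) (hΩ' : Ω < 1 / 4) (hκ : 1 - 2 * Ω * κ > 0)
    (u ρ : ℕ → ℤ → ℝ)
    (huper : ∀ n, n ≤ N → ∀ i : ℤ, u n (i + M) = u n i)
    (hρper : ∀ n, n ≤ N → ∀ i : ℤ, ρ n (i + M) = ρ n i)
    (hschemeA : ∀ n, n < N → ∀ i : ℤ,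
      dT τ (u n) (u (n + 1)) i
        - dT τ (fun j => dXX h (u n) j) (fun j => dXX h (u (n + 1)) j) i
        - κ * dX h (half (u n) (u (n + 1))) i
        + 3 * psiOp h (half (u n) (u (n + 1))) (half (u n) (u (n + 1))) i
      = 3 * σ * psiOp h (fun j => dXX h (half (u n) (u (n + 1))) j)
            (half (u n) (u (n + 1))) i
        - μ * dX h (fun j => dXX h (half (u n) (u (n + 1))) j) i
        - (1 - 2 * Ω * κ) * half (ρ n) (ρ (n + 1)) i * dX h (half (ρ n) (ρ (n + 1))) i
        + 2 * Ω * half (ρ n) (ρ (n + 1)) i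
            * dX h (fun j => half (ρ n) (ρ (n + 1)) j * half (u n) (u (n + 1)) j) i)
    (hschemeB : ∀ n, n < N → ∀ i : ℤ,
      dT τ (ρ n) (ρ (n + 1)) i
        + dX h (fun j => half (ρ n) (ρ (n + 1)) j * half (u n) (u (n + 1)) j) i = 0) :
    ∀ n, n ≤ N → energy M h Ω κ (u n) (ρ n) = energy M h Ω κ (u 0) (ρ 0) := by
  intro n hn
  induction n with
  | zero => rfl
  | succ k ih =>
    have hkN : k < N := Nat.lt_of_succ_le hn
    have hstep := step hM (ne_of_gt hh) (ne_of_gt hτ) κ μ σ Ω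
      (u k) (u (k + 1)) (ρ k) (ρ (k + 1))
      (huper k hkN.le) (huper (k + 1) hn) (hρper k hkN.le) (hρper (k + 1) hn)
      (hschemeA k hkN) (hschemeB k hkN)
    rw [hstep]
    exact ih hkN.le
end

section
/- Suppose {u^n, ρ^n} solve the nonlinear difference scheme of the R2CH system (momentum equation and continuity equation δ_t ρ_i^{n+1/2} + Δ_x(ρ^{n+1/2} u^{n+1/2})_i = 0) with periodic boundary conditions. Then the discrete momentum H^n = (u^n, 1) + Ω‖ρ^n‖² satisfies H^n = H^0 for all 0 ≤ n ≤ N. -/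
/-- Discrete momentum `H^n = (u,1) + Ω‖ρ‖²`. -/
noncomputable def momentum (M : ℕ) (h Ω : ℝ) (u ρ : ℤ → ℝ) : ℝ :=
  h * ∑ i ∈ Finset.Icc (1 : ℤ) (M : ℤ), u i
    + Ω * (h * ∑ i ∈ Finset.Icc (1 : ℤ) (M : ℤ), (ρ i) ^ 2)

section Lemmas
variable (M : ℕ)

lemma sum_shift_s7 (hM : 1 ≤ M) (f : ℤ → ℝ) (hf : ∀ i : ℤ, f (i + M) = f i) :
    ∑ i ∈ Finset.Icc (1:ℤ) (M:ℤ), f (i+1) = ∑ i ∈ Finset.Icc (1:ℤ) (M:ℤ), f i := by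
  have hM' : (1:ℤ) ≤ (M:ℤ) := by exact_mod_cast hM
  have h1 : ∑ i ∈ Finset.Icc (1:ℤ) (M:ℤ), f (i+1) = ∑ i ∈ Finset.Icc (2:ℤ) ((M:ℤ)+1), f i := by
    rw [show (2:ℤ) = 1 + 1 from rfl, ← Finset.map_add_right_Icc, Finset.sum_map]
    simp
  have h2 : Finset.Icc (2:ℤ) ((M:ℤ)+1) = insert ((M:ℤ)+1) (Finset.Icc 2 (M:ℤ)) := by
    ext x; simp [Finset.mem_Icc]; omega
  have h3 : Finset.Icc (1:ℤ) (M:ℤ) = insert (1:ℤ) (Finset.Icc 2 (M:ℤ)) := by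
    ext x; simp [Finset.mem_Icc]; omega
  rw [h1, h2, h3, Finset.sum_insert (by simp), Finset.sum_insert (by simp)]
  have : f ((M:ℤ)+1) = f 1 := by rw [add_comm]; exact hf 1
  rw [this]

lemma sum_shift'_s7 (hM : 1 ≤ M) (f : ℤ → ℝ) (hf : ∀ i : ℤ, f (i + M) = f i) :
    ∑ i ∈ Finset.Icc (1:ℤ) (M:ℤ), f (i-1) = ∑ i ∈ Finset.Icc (1:ℤ) (M:ℤ), f i := by
  have := sum_shift_s7 M hM (fun i => f (i-1)) (fun i => by rw [show i + (M:ℤ) - 1 = (i-1) + (M:ℤ) from by ring, hf])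
  simpa using this.symm

lemma sum_dX (hM : 1 ≤ M) (h : ℝ) (g : ℤ → ℝ) (hg : ∀ i : ℤ, g (i + M) = g i) :
    ∑ i ∈ Finset.Icc (1:ℤ) (M:ℤ), dX h g i = 0 := by
  simp only [dX, div_eq_mul_inv, sub_mul]
  rw [Finset.sum_sub_distrib, ← Finset.sum_mul, ← Finset.sum_mul,
    sum_shift_s7 M hM g hg, sum_shift'_s7 M hM g hg, sub_self]

lemma sum_dXX (hM : 1 ≤ M) (h : ℝ) (g : ℤ → ℝ) (hg : ∀ i : ℤ, g (i + M) = g i) :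
    ∑ i ∈ Finset.Icc (1:ℤ) (M:ℤ), dXX h g i = 0 := by
  simp only [dXX, div_eq_mul_inv, sub_mul, add_mul]
  rw [Finset.sum_add_distrib, Finset.sum_sub_distrib, ← Finset.sum_mul, ← Finset.sum_mul,
    ← Finset.sum_mul, sum_shift_s7 M hM g hg, sum_shift'_s7 M hM g hg]
  rw [← Finset.mul_sum]; ring

lemma sum_mul_dX (hM : 1 ≤ M) (h : ℝ) (g : ℤ → ℝ) (hg : ∀ i : ℤ, g (i + M) = g i) :
    ∑ i ∈ Finset.Icc (1:ℤ) (M:ℤ), g i * dX h g i = 0 := by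
  have e : ∀ i : ℤ, g i * dX h g i = (g i * g (i+1)) * (2*h)⁻¹ - (g (i-1) * g i) * (2*h)⁻¹ := by
    intro i; simp only [dX]; ring
  rw [Finset.sum_congr rfl (fun i _ => e i), Finset.sum_sub_distrib, ← Finset.sum_mul,
    ← Finset.sum_mul]
  have := sum_shift'_s7 M hM (fun i => g i * g (i+1)) (fun i => by
    rw [show i + (M:ℤ) + 1 = (i+1) + (M:ℤ) from by ring, hg, hg])
  simp only [show ∀ i : ℤ, i - 1 + 1 = i from fun i => by ring] at this
  rw [this, sub_self]

lemma sum_dXX_mul_dX (hM : 1 ≤ M) (h : ℝ) (hh : h ≠ 0) (g : ℤ → ℝ)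
    (hg : ∀ i : ℤ, g (i + M) = g i) :
    ∑ i ∈ Finset.Icc (1:ℤ) (M:ℤ), dXX h g i * dX h g i = 0 := by
  have e : ∀ i : ℤ, dXX h g i * dX h g i =
      (g (i+1))^2 * (2*h^3)⁻¹ - (g (i-1))^2 * (2*h^3)⁻¹
      - (g i * g (i+1)) * (h^3)⁻¹ + (g (i-1) * g i) * (h^3)⁻¹ := by
    intro i; simp only [dXX, dX]; field_simp; ring
  rw [Finset.sum_congr rfl (fun i _ => e i), Finset.sum_add_distrib, Finset.sum_sub_distrib,
    Finset.sum_sub_distrib, ← Finset.sum_mul, ← Finset.sum_mul,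
    ← Finset.sum_mul, ← Finset.sum_mul]
  have h1 := sum_shift_s7 M hM (fun i => (g i)^2) (fun i => by rw [hg])
  have h2 := sum_shift'_s7 M hM (fun i => (g i)^2) (fun i => by rw [hg])
  have h3 := sum_shift'_s7 M hM (fun i => g i * g (i+1)) (fun i => by
    rw [show i + (M:ℤ) + 1 = (i+1) + (M:ℤ) from by ring, hg, hg])
  simp only [show ∀ i : ℤ, i - 1 + 1 = i from fun i => by ring] at h3
  rw [h1, h2, h3]; ring

end Lemmas

section Lemmas2
variable (M : ℕ)

lemma per_dXX (h : ℝ) (g : ℤ → ℝ) (hg : ∀ i : ℤ, g (i + M) = g i) :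
    ∀ i : ℤ, dXX h g (i + M) = dXX h g i := by
  intro i; simp only [dXX]
  rw [show i+(M:ℤ)+1 = (i+1)+(M:ℤ) from by ring, show i+(M:ℤ)-1 = (i-1)+(M:ℤ) from by ring,
    hg, hg, hg]

lemma sum_psi_self (hM : 1 ≤ M) (h : ℝ) (g : ℤ → ℝ) (hg : ∀ i : ℤ, g (i + M) = g i) :
    ∑ i ∈ Finset.Icc (1:ℤ) (M:ℤ), psiOp h g g i = 0 := by
  simp only [psiOp]
  rw [← Finset.mul_sum, Finset.sum_add_distrib, sum_mul_dX M hM h g hg,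
    sum_dX M hM h (fun j => g j * g j) (fun i => by rw [hg])]
  ring

lemma sum_psi_dXX (hM : 1 ≤ M) (h : ℝ) (hh : h ≠ 0) (g : ℤ → ℝ)
    (hg : ∀ i : ℤ, g (i + M) = g i) :
    ∑ i ∈ Finset.Icc (1:ℤ) (M:ℤ), psiOp h (fun j => dXX h g j) g i = 0 := by
  simp only [psiOp]
  rw [← Finset.mul_sum, Finset.sum_add_distrib, sum_dXX_mul_dX M hM h hh g hg,
    sum_dX M hM h (fun j => dXX h g j * g j)
      (fun i => by rw [per_dXX M h g hg, hg])]
  ring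

end Lemmas2

theorem step7 (M N : ℕ) (hM : 1 ≤ M) (h τ : ℝ) (hh : 0 < h) (hτ : 0 < τ)
    (κ μ σ Ω : ℝ)
    (u ρ : ℕ → ℤ → ℝ)
    (huper : ∀ n, n ≤ N → ∀ i : ℤ, u n (i + M) = u n i)
    (hρper : ∀ n, n ≤ N → ∀ i : ℤ, ρ n (i + M) = ρ n i)
    (hschemeA : ∀ n, n < N → ∀ i : ℤ,
      dT τ (u n) (u (n + 1)) i
        - dT τ (fun j => dXX h (u n) j) (fun j => dXX h (u (n + 1)) j) i
        - κ * dX h (half (u n) (u (n + 1))) i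
        + 3 * psiOp h (half (u n) (u (n + 1))) (half (u n) (u (n + 1))) i
      = 3 * σ * psiOp h (fun j => dXX h (half (u n) (u (n + 1))) j)
            (half (u n) (u (n + 1))) i
        - μ * dX h (fun j => dXX h (half (u n) (u (n + 1))) j) i
        - (1 - 2 * Ω * κ) * half (ρ n) (ρ (n + 1)) i * dX h (half (ρ n) (ρ (n + 1))) i
        + 2 * Ω * half (ρ n) (ρ (n + 1)) i
            * dX h (fun j => half (ρ n) (ρ (n + 1)) j * half (u n) (u (n + 1)) j) i)
    (hschemeB : ∀ n, n < N → ∀ i : ℤ,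
      dT τ (ρ n) (ρ (n + 1)) i
        + dX h (fun j => half (ρ n) (ρ (n + 1)) j * half (u n) (u (n + 1)) j) i = 0) :
    ∀ n, n < N →
      (h * ∑ i ∈ Finset.Icc (1 : ℤ) (M : ℤ), u (n+1) i
        + Ω * (h * ∑ i ∈ Finset.Icc (1 : ℤ) (M : ℤ), (ρ (n+1) i) ^ 2))
      = (h * ∑ i ∈ Finset.Icc (1 : ℤ) (M : ℤ), u n i
        + Ω * (h * ∑ i ∈ Finset.Icc (1 : ℤ) (M : ℤ), (ρ n i) ^ 2)) := by
  intro n hn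
  set U := half (u n) (u (n + 1)) with hU
  set R := half (ρ n) (ρ (n + 1)) with hR
  have hUper : ∀ i : ℤ, U (i + M) = U i := fun i => by
    simp only [hU, half, huper n hn.le i, huper (n+1) hn i]
  have hRper : ∀ i : ℤ, R (i + M) = R i := fun i => by
    simp only [hR, half, hρper n hn.le i, hρper (n+1) hn i]
  have key : ∑ i ∈ Finset.Icc (1:ℤ) (M:ℤ),
      (dT τ (u n) (u (n+1)) i + 2 * Ω * R i * dT τ (ρ n) (ρ (n+1)) i) = 0 := by
    have pointwise : ∀ i ∈ Finset.Icc (1:ℤ) (M:ℤ),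
        dT τ (u n) (u (n+1)) i + 2 * Ω * R i * dT τ (ρ n) (ρ (n+1)) i
        = dT τ (fun j => dXX h (u n) j) (fun j => dXX h (u (n + 1)) j) i
          + κ * dX h U i - 3 * psiOp h U U i
          + 3 * σ * psiOp h (fun j => dXX h U j) U i
          - μ * dX h (fun j => dXX h U j) i
          - (1 - 2 * Ω * κ) * (R i * dX h R i) := by
      intro i _
      have hAi := hschemeA n hn i
      have hBi := hschemeB n hn i
      rw [← hU, ← hR] at hAi hBi
      linear_combination hAi + 2 * Ω * R i * hBi
    rw [Finset.sum_congr rfl pointwise]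
    have s1 : ∑ i ∈ Finset.Icc (1:ℤ) (M:ℤ),
        dT τ (fun j => dXX h (u n) j) (fun j => dXX h (u (n + 1)) j) i = 0 := by
      simp only [dT]
      rw [← Finset.sum_div, Finset.sum_sub_distrib,
        sum_dXX M hM h (u (n+1)) (huper (n+1) hn),
        sum_dXX M hM h (u n) (huper n hn.le), sub_self, zero_div]
    simp only [Finset.sum_add_distrib, Finset.sum_sub_distrib, ← Finset.mul_sum]
    rw [s1, sum_dX M hM h U hUper, sum_psi_self M hM h U hUper,
      sum_psi_dXX M hM h hh.ne' U hUper,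
      sum_dX M hM h (fun j => dXX h U j) (per_dXX M h U hUper),
      sum_mul_dX M hM h R hRper]
    ring
  have key2 : ∑ i ∈ Finset.Icc (1:ℤ) (M:ℤ),
      (u (n+1) i - u n i + Ω * ((ρ (n+1) i)^2 - (ρ n i)^2)) = 0 := by
    have e : ∀ i ∈ Finset.Icc (1:ℤ) (M:ℤ),
        u (n+1) i - u n i + Ω * ((ρ (n+1) i)^2 - (ρ n i)^2)
        = τ * (dT τ (u n) (u (n+1)) i + 2 * Ω * R i * dT τ (ρ n) (ρ (n+1)) i) := by
      intro i _
      simp only [dT, hR, half]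
      field_simp
      ring
    rw [Finset.sum_congr rfl e, ← Finset.mul_sum, key, mul_zero]
  simp only [Finset.sum_add_distrib, Finset.sum_sub_distrib, ← Finset.mul_sum] at key2
  linear_combination h * key2

theorem stmt_7 (M N : ℕ) (hM : 1 ≤ M) (h τ : ℝ) (hh : 0 < h) (hτ : 0 < τ)
    (κ μ σ Ω : ℝ) (hΩ : 0 ≤ Ω) (hΩ' : Ω < 1 / 4) (hκ : 1 - 2 * Ω * κ > 0)
    (u ρ : ℕ → ℤ → ℝ)
    (huper : ∀ n, n ≤ N → ∀ i : ℤ, u n (i + M) = u n i)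
    (hρper : ∀ n, n ≤ N → ∀ i : ℤ, ρ n (i + M) = ρ n i)
    (hschemeA : ∀ n, n < N → ∀ i : ℤ,
      dT τ (u n) (u (n + 1)) i
        - dT τ (fun j => dXX h (u n) j) (fun j => dXX h (u (n + 1)) j) i
        - κ * dX h (half (u n) (u (n + 1))) i
        + 3 * psiOp h (half (u n) (u (n + 1))) (half (u n) (u (n + 1))) i
      = 3 * σ * psiOp h (fun j => dXX h (half (u n) (u (n + 1))) j)
            (half (u n) (u (n + 1))) i
        - μ * dX h (fun j => dXX h (half (u n) (u (n + 1))) j) i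
        - (1 - 2 * Ω * κ) * half (ρ n) (ρ (n + 1)) i * dX h (half (ρ n) (ρ (n + 1))) i
        + 2 * Ω * half (ρ n) (ρ (n + 1)) i
            * dX h (fun j => half (ρ n) (ρ (n + 1)) j * half (u n) (u (n + 1)) j) i)
    (hschemeB : ∀ n, n < N → ∀ i : ℤ,
      dT τ (ρ n) (ρ (n + 1)) i
        + dX h (fun j => half (ρ n) (ρ (n + 1)) j * half (u n) (u (n + 1)) j) i = 0) :
    ∀ n, n ≤ N → momentum M h Ω (u n) (ρ n) = momentum M h Ω (u 0) (ρ 0) := by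
  intro n hnN
  induction n with
  | zero => rfl
  | succ k ih =>
    have hk : k < N := Nat.lt_of_succ_le hnN
    have hstep := step7 M N hM h τ hh hτ κ μ σ Ω u ρ huper hρper hschemeA hschemeB k hk
    have hih := ih hk.le
    simp only [momentum] at hih ⊢
    rw [hstep, hih]
end

section
/- Let u be an M-periodic grid function with ‖u‖_∞ < 2h/τ, where h > 0 is the spatial step and τ > 0 the time step. Then the only M-periodic grid function ρ satisfying the homogeneous linear system (2/τ)ρ_i + Δ_x(ρu)_i = 0 for all i is ρ = 0; consequently the linear system (2/τ)(ρ_i - ρ_i^n) + Δ_x(ρu)_i = 0 has a unique solution ρ for any given data ρ^n. -/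
lemma per_mod' {ρ : ℤ → ℝ} {M : ℕ} (hM : 1 ≤ M) (hp : ∀ i : ℤ, ρ (i + M) = ρ i) :
    ∀ i : ℤ, ρ i = ρ (i % M) := by
  have key : ∀ k : ℤ, ∀ j : ℤ, ρ (j + M * k) = ρ j := by
    intro k
    induction k using Int.induction_on with
    | zero => simp
    | succ n ih =>
        intro j
        have e : j + (M : ℤ) * ((n : ℤ) + 1) = (j + M * n) + M := by ring
        rw [e, hp, ih]
    | pred n ih =>
        intro j
        have h1 := hp (j + (M : ℤ) * (-(n : ℤ) - 1))
        have h2 : j + (M : ℤ) * (-(n : ℤ) - 1) + M = j + M * (-(n : ℤ)) := by ring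
        rw [h2] at h1
        rw [← h1, ih]
  intro i
  have h3 := key (i / M) (i % M)
  rw [← h3]
  congr 1
  exact (Int.emod_add_mul_ediv i M).symm

theorem stmt_10 (M : ℕ) (hM : 1 ≤ M) (h τ : ℝ) (hh : 0 < h) (hτ : 0 < τ)
    (u : ℤ → ℝ) (huper : ∀ i : ℤ, u (i + M) = u i)
    (hubd : ∀ i : ℤ, |u i| < 2 * h / τ) :
    (∀ ρ : ℤ → ℝ, (∀ i : ℤ, ρ (i + M) = ρ i) →
      (∀ i : ℤ, (2 / τ) * ρ i + dX h (fun j => ρ j * u j) i = 0) →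
      ∀ i : ℤ, ρ i = 0) ∧
    (∀ ρdata ρ₁ ρ₂ : ℤ → ℝ, (∀ i : ℤ, ρ₁ (i + M) = ρ₁ i) → (∀ i : ℤ, ρ₂ (i + M) = ρ₂ i) →
      (∀ i : ℤ, (2 / τ) * (ρ₁ i - ρdata i) + dX h (fun j => ρ₁ j * u j) i = 0) →
      (∀ i : ℤ, (2 / τ) * (ρ₂ i - ρdata i) + dX h (fun j => ρ₂ j * u j) i = 0) →
      ∀ i : ℤ, ρ₁ i = ρ₂ i) := by
  have Mpos : (0 : ℤ) < M := by exact_mod_cast hM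
  have main : ∀ ρ : ℤ → ℝ, (∀ i : ℤ, ρ (i + M) = ρ i) →
      (∀ i : ℤ, (2 / τ) * ρ i + dX h (fun j => ρ j * u j) i = 0) →
      ∀ i : ℤ, ρ i = 0 := by
    intro ρ hper heq
    have hne : (Finset.Icc (0 : ℤ) ((M : ℤ) - 1)).Nonempty := ⟨0, by simp; omega⟩
    set B := (Finset.Icc (0 : ℤ) ((M : ℤ) - 1)).sup' hne (fun j => |ρ j|) with hBdef
    have hle : ∀ i, |ρ i| ≤ B := by
      intro i
      rw [per_mod' hM hper i, hBdef]
      refine Finset.le_sup' (fun j => |ρ j|) ?_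
      simp only [Finset.mem_Icc]
      have h1 := Int.emod_nonneg i (by omega : (M : ℤ) ≠ 0)
      have h2 := Int.emod_lt_of_pos i Mpos
      omega
    obtain ⟨i0, _, hi0⟩ := Finset.exists_mem_eq_sup' hne (fun j => |ρ j|)
    have hB0 : B ≤ 0 := by
      by_contra hBpos
      push_neg at hBpos
      have h1 : 4 * h * ρ i0 = τ * (ρ (i0 - 1) * u (i0 - 1) - ρ (i0 + 1) * u (i0 + 1)) := by
        have e := heq i0
        simp only [dX] at e
        field_simp at e
        linarith
      have hA : |ρ (i0 + 1) * u (i0 + 1)| < B * (2 * h / τ) := by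
        rw [abs_mul]
        calc |ρ (i0 + 1)| * |u (i0 + 1)| ≤ B * |u (i0 + 1)| :=
              mul_le_mul_of_nonneg_right (hle _) (abs_nonneg _)
          _ < B * (2 * h / τ) := by
              exact mul_lt_mul_of_pos_left (hubd _) hBpos
      have hBv : |ρ (i0 - 1) * u (i0 - 1)| < B * (2 * h / τ) := by
        rw [abs_mul]
        calc |ρ (i0 - 1)| * |u (i0 - 1)| ≤ B * |u (i0 - 1)| :=
              mul_le_mul_of_nonneg_right (hle _) (abs_nonneg _)
          _ < B * (2 * h / τ) := by
              exact mul_lt_mul_of_pos_left (hubd _) hBpos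
      have habs : 4 * h * |ρ i0| = τ * |ρ (i0 - 1) * u (i0 - 1) - ρ (i0 + 1) * u (i0 + 1)| := by
        have := congrArg abs h1
        rwa [abs_mul, abs_mul, abs_mul, abs_of_pos hτ,
          show |(4:ℝ)| = 4 by norm_num, abs_of_pos hh] at this
      have htri : |ρ (i0 - 1) * u (i0 - 1) - ρ (i0 + 1) * u (i0 + 1)| ≤
          |ρ (i0 - 1) * u (i0 - 1)| + |ρ (i0 + 1) * u (i0 + 1)| := abs_sub _ _
      have hlt : 4 * h * |ρ i0| < τ * (2 * (B * (2 * h / τ))) := by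
        rw [habs]
        have : |ρ (i0 - 1) * u (i0 - 1) - ρ (i0 + 1) * u (i0 + 1)| <
            2 * (B * (2 * h / τ)) := by linarith
        exact mul_lt_mul_of_pos_left this hτ
      have hval : τ * (2 * (B * (2 * h / τ))) = 4 * h * B := by
        field_simp; ring
      have hBi : B = |ρ i0| := hi0
      rw [hval, ← hBi] at hlt
      linarith
    intro i
    have hb := hle i
    have := abs_nonneg (ρ i)
    have : |ρ i| = 0 := le_antisymm (le_trans hb hB0) (abs_nonneg _)
    exact abs_eq_zero.mp this
  refine ⟨main, ?_⟩
  intro ρdata ρ₁ ρ₂ hp1 hp2 he1 he2 i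
  have hz := main (fun j => ρ₁ j - ρ₂ j) (fun j => by simp [hp1 j, hp2 j])
    (fun j => by
      have e1 := he1 j
      have e2 := he2 j
      simp only [dX] at e1 e2 ⊢
      have hh2 : (2 : ℝ) * h ≠ 0 := by positivity
      field_simp at e1 e2 ⊢
      linarith) i
  linarith
end

section
/- For M-periodic grid functions e and U, the estimate -σ(δ_x² e · U, Δ_x e) ≤ (σ/2) ‖δ_x U‖_∞ |e|_1² holds for any σ ≥ 0, where the left side equals (σh/2) Σ_{i=1}^M (δ_x e_{i+1/2})² δ_x U_{i+1/2} after summation by parts; here δ_x² e_i = (e_{i+1} - 2e_i + e_{i-1})/h², Δ_x e_i = (e_{i+1} - e_{i-1})/(2h), δ_x e_{i+1/2} = (e_{i+1} - e_i)/h, |e|_1² = h Σ (δ_x e_{i-1/2})², and ‖δ_x U‖_∞ = max_i |δ_x U_{i+1/2}|. -/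
/-- Shift lemma: for M ≥ 1 and f with f 0 = f M, ∑_{i=1}^M f(i-1) = ∑_{i=1}^M f i. -/
lemma shift_sum (M : ℤ) (hM : 1 ≤ M) (f : ℤ → ℝ) (hf : f 0 = f M) :
    ∑ i ∈ Finset.Icc (1 : ℤ) M, f (i - 1) = ∑ i ∈ Finset.Icc (1 : ℤ) M, f i := by
  have h1 : ∑ i ∈ Finset.Icc (1 : ℤ) M, f (i - 1)
      = ∑ i ∈ Finset.Icc (0 : ℤ) (M - 1), f i := by
    set_option linter.unnecessarySeqFocus false in
    apply Finset.sum_nbij' (fun i => i - 1) (fun i => i + 1) <;>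
      intros <;> simp_all [Finset.mem_Icc] <;> omega
  rw [h1]
  have h2 : Finset.Icc (0 : ℤ) (M - 1) = insert 0 (Finset.Icc (1 : ℤ) (M - 1)) := by
    ext x; simp [Finset.mem_Icc]; omega
  have h3 : Finset.Icc (1 : ℤ) M = insert M (Finset.Icc (1 : ℤ) (M - 1)) := by
    ext x; simp [Finset.mem_Icc]; omega
  rw [h2, h3, Finset.sum_insert (by simp), Finset.sum_insert (by simp [Finset.mem_Icc]), hf]

theorem stmt_14 (M : ℕ) (hM : 1 ≤ M) (h σ : ℝ) (hh : 0 < h) (hσ : 0 ≤ σ)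
    (e U : ℤ → ℝ) (he : ∀ i : ℤ, e (i + M) = e i) (hU : ∀ i : ℤ, U (i + M) = U i) :
    -(σ * (h * ∑ i ∈ Finset.Icc (1 : ℤ) (M : ℤ), (dXX h e i * U i) * dX h e i)) ≤
      (σ / 2) *
        ((Finset.Icc (1 : ℤ) (M : ℤ)).sup'
          (Finset.nonempty_Icc.mpr (by exact_mod_cast hM))
          (fun i => |(U (i + 1) - U i) / h|)) *
        (h * ∑ i ∈ Finset.Icc (1 : ℤ) (M : ℤ), ((e i - e (i - 1)) / h) ^ 2) := by
  have hh' : h ≠ 0 := ne_of_gt hh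
  have hM' : (1 : ℤ) ≤ (M : ℤ) := by exact_mod_cast hM
  set D : ℤ → ℝ := fun i => (e (i + 1) - e i) / h with hD
  set G : ℤ → ℝ := fun i => (U (i + 1) - U i) / h with hG
  set K := (Finset.Icc (1 : ℤ) (M : ℤ)).sup'
      (Finset.nonempty_Icc.mpr (by exact_mod_cast hM))
      (fun i => |(U (i + 1) - U i) / h|) with hKdef
  -- summand identity
  have key : ∀ i : ℤ, dXX h e i * U i * dX h e i = (D i ^ 2 - D (i - 1) ^ 2) * U i / (2 * h) := by
    intro i
    simp only [dXX, dX, hD]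
    have hi : i - 1 + 1 = i := by ring
    rw [hi]
    field_simp
    ring
  -- periodicity of D
  have hDper : ∀ i : ℤ, D (i + M) = D i := by
    intro i
    simp only [hD]
    have : i + (M : ℤ) + 1 = i + 1 + (M : ℤ) := by ring
    rw [this, he, he]
  -- summation by parts
  have sbp : ∑ i ∈ Finset.Icc (1 : ℤ) (M : ℤ), (D i ^ 2 - D (i - 1) ^ 2) * U i
      = -(h * ∑ i ∈ Finset.Icc (1 : ℤ) (M : ℤ), D i ^ 2 * G i) := by
    have hshift : ∑ i ∈ Finset.Icc (1 : ℤ) (M : ℤ), D (i - 1) ^ 2 * U i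
        = ∑ i ∈ Finset.Icc (1 : ℤ) (M : ℤ), D i ^ 2 * U (i + 1) := by
      have := shift_sum (M : ℤ) hM' (fun i => D i ^ 2 * U (i + 1)) ?_
      · convert this using 2 with i
        ring_nf
      · rw [show (0 : ℤ) = 0 + 0 from rfl]
        have h1 : D (0 : ℤ) = D (M : ℤ) := by
          have := hDper 0; rw [zero_add] at this; exact this.symm
        have h2 : U ((M : ℤ) + 1) = U (0 + 1) := by
          have := hU 1; rw [show (1 : ℤ) + (M : ℤ) = (M : ℤ) + 1 from by ring] at this
          simpa using this
        simp [h1, h2]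
    have expand : ∀ i : ℤ, (D i ^ 2 - D (i - 1) ^ 2) * U i
        = D i ^ 2 * U i - D (i - 1) ^ 2 * U i := by intro i; ring
    simp only [expand, Finset.sum_sub_distrib, hshift]
    rw [Finset.mul_sum, ← Finset.sum_sub_distrib, ← Finset.sum_neg_distrib]
    apply Finset.sum_congr rfl
    intro i _
    simp only [hG]
    field_simp
    ring
  -- rewrite the last factor
  have hlast : ∑ i ∈ Finset.Icc (1 : ℤ) (M : ℤ), ((e i - e (i - 1)) / h) ^ 2
      = ∑ i ∈ Finset.Icc (1 : ℤ) (M : ℤ), D i ^ 2 := by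
    have step : ∀ i : ℤ, ((e i - e (i - 1)) / h) ^ 2 = D (i - 1) ^ 2 := by
      intro i; simp only [hD]
      rw [show i - 1 + 1 = i from by ring]
    simp only [step]
    exact shift_sum (M : ℤ) hM' (fun i => D i ^ 2) (by
      have := hDper 0; rw [zero_add] at this
      show D (0:ℤ) ^ 2 = D (M:ℤ) ^ 2
      rw [this])
  -- bound on G
  have hKbd : ∀ i ∈ Finset.Icc (1 : ℤ) (M : ℤ), G i ≤ K := by
    intro i hi
    refine le_trans (le_abs_self _) ?_
    exact Finset.le_sup' (fun i => |(U (i + 1) - U i) / h|) hi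
  have hSle : ∑ i ∈ Finset.Icc (1 : ℤ) (M : ℤ), D i ^ 2 * G i
      ≤ K * ∑ i ∈ Finset.Icc (1 : ℤ) (M : ℤ), D i ^ 2 := by
    rw [Finset.mul_sum]
    apply Finset.sum_le_sum
    intro i hi
    have := hKbd i hi
    nlinarith [sq_nonneg (D i)]
  -- assemble
  have hLHS : -(σ * (h * ∑ i ∈ Finset.Icc (1 : ℤ) (M : ℤ), (dXX h e i * U i) * dX h e i))
      = σ * h / 2 * ∑ i ∈ Finset.Icc (1 : ℤ) (M : ℤ), D i ^ 2 * G i := by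
    simp only [key]
    rw [show (∑ i ∈ Finset.Icc (1 : ℤ) (M : ℤ), (D i ^ 2 - D (i - 1) ^ 2) * U i / (2 * h))
        = (∑ i ∈ Finset.Icc (1 : ℤ) (M : ℤ), (D i ^ 2 - D (i - 1) ^ 2) * U i) / (2 * h) from
      (Finset.sum_div _ _ _).symm, sbp]
    field_simp
  rw [hLHS, hlast]
  have hhalf : 0 ≤ σ * h / 2 := by positivity
  calc σ * h / 2 * ∑ i ∈ Finset.Icc (1 : ℤ) (M : ℤ), D i ^ 2 * G i
      ≤ σ * h / 2 * (K * ∑ i ∈ Finset.Icc (1 : ℤ) (M : ℤ), D i ^ 2) :=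
        mul_le_mul_of_nonneg_left hSle hhalf
    _ = σ / 2 * K * (h * ∑ i ∈ Finset.Icc (1 : ℤ) (M : ℤ), D i ^ 2) := by ring
end
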